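/- For every integer k ≥ 1, every integer m ≥ 0 and every real number x, E_{m,1/q}^{(k,k)}(k−x) = (−1)^m q^{m + k(k−1)/2} E_{m,q}^{(k,k)}(x), where E_{m,1/q}^{(k,k)} denotes the same polynomial with q replaced by 1/q. -/

import Mathlib

open Finset

/-- The q-number `[x]_q = (1 - q^x)/(1 - q)`, with `q^x = exp (x * log q)` (rpow). -/
noncomputable def qNum (q x : ℝ) : ℝ := (1 - q ^ x) / (1 - q)

/-- `[l]_{-q} = (1 - (-q)^l)/(1 + q)` for a natural number `l`. -/
noncomputable def qNumNeg (q : ℝ) (l : ℕ) : ℝ := (1 - (-q) ^ l) / (1 + q)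

/-- The higher-order q-Euler polynomial
`E_{m,q}^{(h,k)}(x) = ((1+q)^k/(1-q)^m) * Σ_{j=0}^m C(m,j) (-1)^j q^{jx} / Π_{i=0}^{k-1} (1 + q^{h+j-i})`. -/
noncomputable def qE (q : ℝ) (h : ℤ) (k m : ℕ) (x : ℝ) : ℝ :=
  ((1 + q) ^ k / (1 - q) ^ m) *
    ∑ j ∈ Finset.range (m + 1),
      (m.choose j : ℝ) * (-1) ^ j * q ^ ((j : ℝ) * x) /
        ∏ i ∈ Finset.range k, (1 + q ^ ((h : ℝ) + (j : ℝ) - (i : ℝ)))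

/-!
Under `q ↦ 1/q` every factor of the denominator of the `j`-th summand becomes
`1 + q^(-a) = q^(-a) (1 + q^a)`, so the denominator picks up `q^(-(k(h+j) - C(k,2)))`,
while the numerator picks up `q^(-j(k-x))` instead of `q^(jx)`. The `j`-dependent powers
`q^(kj)` cancel, leaving the constant `q^(kh - C(k,2))`; the prefactor contributes
`(-1)^m q^(m-k)`. For `h = k` the exponent is `m + C(k,2)`.
-/

open Real

lemma one_add_one_div_rpow {q : ℝ} (hq : 0 < q) (a : ℝ) :
    1 + (1 / q) ^ a = (1 + q ^ a) / q ^ a := by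
  rw [one_div, inv_rpow hq.le]
  field_simp
  ring

lemma prod_one_add_one_div_rpow {ι : Type*} {q : ℝ} (hq : 0 < q) (s : Finset ι) (f : ι → ℝ) :
    ∏ i ∈ s, (1 + (1 / q) ^ f i) = (∏ i ∈ s, (1 + q ^ f i)) / q ^ ∑ i ∈ s, f i := by
  rw [rpow_sum_of_pos hq, ← prod_div_distrib]
  exact prod_congr rfl fun i _ => one_add_one_div_rpow hq _

lemma sum_range_sub_natCast (a : ℝ) (k : ℕ) :
    ∑ i ∈ range k, (a - i) = k * a - k.choose 2 := by
  rw [sum_sub_distrib, ← Nat.cast_sum, sum_range_id, ← Nat.choose_two_right]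
  simp

lemma one_add_one_div_pow_div_one_sub_one_div_pow {q : ℝ} (hq : q ≠ 0) (k m : ℕ) :
    (1 + 1 / q) ^ k / (1 - 1 / q) ^ m =
      (-1) ^ m * (q ^ m / q ^ k) * ((1 + q) ^ k / (1 - q) ^ m) := by
  rw [show 1 + 1 / q = (1 + q) * q⁻¹ by field_simp; ring,
    show 1 - 1 / q = (-1) * (1 - q) * q⁻¹ by field_simp; ring]
  simp only [div_eq_mul_inv, mul_pow, mul_inv, ← inv_pow, inv_inv, inv_neg_one]
  ring

lemma qE_summand_one_div {q : ℝ} (hq : 0 < q) (h : ℤ) (k j : ℕ) (c x : ℝ) :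
    c * (1 / q) ^ ((j : ℝ) * (k - x)) / ∏ i ∈ range k, (1 + (1 / q) ^ ((h : ℝ) + j - i)) =
      q ^ ((k : ℝ) * h - k.choose 2) *
        (c * q ^ ((j : ℝ) * x) / ∏ i ∈ range k, (1 + q ^ ((h : ℝ) + j - i))) := by
  have hpow : (1 / q) ^ ((j : ℝ) * (k - x)) * q ^ ((k : ℝ) * (h + j) - k.choose 2) =
      q ^ ((k : ℝ) * h - k.choose 2) * q ^ ((j : ℝ) * x) := by
    rw [one_div, inv_rpow hq.le, ← rpow_neg hq.le, ← rpow_add hq, ← rpow_add hq]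
    ring_nf
  rw [prod_one_add_one_div_rpow hq, sum_range_sub_natCast, div_div_eq_mul_div, mul_assoc c, hpow]
  ring

theorem qE_one_div_natCast_sub {q : ℝ} (hq : 0 < q) (h : ℤ) (k m : ℕ) (x : ℝ) :
    qE (1 / q) h k m (k - x) =
      (-1) ^ m * q ^ ((m : ℝ) + k * (h - 1) - k.choose 2) * qE q h k m x := by
  have hpow : q ^ ((m : ℝ) + k * (h - 1) - k.choose 2) =
      q ^ m / q ^ k * q ^ ((k : ℝ) * h - k.choose 2) := by
    rw [← rpow_natCast, ← rpow_natCast, ← rpow_sub hq, ← rpow_add hq]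
    ring_nf
  simp only [qE, one_add_one_div_pow_div_one_sub_one_div_pow hq.ne', qE_summand_one_div hq,
    ← mul_sum, hpow]
  ring

theorem stmt_12 (q : ℝ) (hq : 0 < q) (k : ℕ) (m : ℕ) (x : ℝ) :
    qE (1 / q) k k m ((k : ℝ) - x) = (-1) ^ m * q ^ (m + k * (k - 1) / 2) * qE q k k m x := by
  rw [qE_one_div_natCast_sub hq, ← rpow_natCast q, ← Nat.choose_two_right]
  push_cast [Nat.cast_choose_two]
  ring_nf
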